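/- arXiv:2312.08941 — 3 statements merged into one kernel-verified Lean document; each statement's English description precedes it below -/
import Mathlib

section
/- Let φ : ℝⁿ×(0,∞) → (0,∞) satisfy the doubling condition (there is C > 0 with C⁻¹ ≤ φ(x,r)/φ(x,s) ≤ C whenever 1/2 ≤ r/s ≤ 2) and the integral condition ∫_r^∞ φ(x,t)/t dt ≤ C φ(x,r) for all x ∈ ℝⁿ and r > 0. Then for every p ∈ (0,∞) there is a constant C_p such that for all x ∈ ℝⁿ and r > 0: ∫_r^∞ φ(x,t)^{1/p}/t dt ≤ C_p φ(x,r)^{1/p}. -/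
/-!
Write `I(s) = ∫_s^∞ φ(t)/t dt`. Doubling gives `φ(s) ≲ ∫_s^{2s} φ(t)/t dt = I(s) - I(2s)`,
while the integral condition gives `I(2s) ≲ φ(2s) ≲ φ(s)`; together `I(2s) ≤ θ I(s)` for some
`θ < 1`. Iterating, `φ(2^k r) ≲ I(2^k r) ≲ θ^k φ(r)`, so on each dyadic block `[2^k r, 2^{k+1} r)`
the function `φ^{1/p}` is `≲ (θ^{1/p})^k φ(r)^{1/p}`, and summing the geometric series bounds
`∫_r^∞ φ^{1/p}(t)/t dt`.
-/

open MeasureTheory Set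

lemma Ioi_subset_iUnion_Ico_two_pow {r : ℝ} (hr : 0 < r) :
    Ioi r ⊆ ⋃ k : ℕ, Ico (2 ^ k * r) (2 ^ (k + 1) * r) := by
  intro t ht
  obtain ⟨k, hk₁, hk₂⟩ := exists_nat_pow_near ((one_le_div hr).2 (le_of_lt ht)) one_lt_two
  exact mem_iUnion.2 ⟨k, (le_div_iff₀ hr).1 hk₁, (div_lt_iff₀ hr).1 hk₂⟩

lemma lintegral_Ico_two_mul_div_le {g : ℝ → ℝ} {a M : ℝ} (ha : 0 < a) (hM : 0 ≤ M)
    (hg : ∀ t ∈ Ico a (2 * a), g t ≤ M) :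
    ∫⁻ t in Ico a (2 * a), ENNReal.ofReal (g t / t) ≤ ENNReal.ofReal M := by
  calc ∫⁻ t in Ico a (2 * a), ENNReal.ofReal (g t / t)
      ≤ ∫⁻ _ in Ico a (2 * a), ENNReal.ofReal (M / a) :=
        setLIntegral_mono' measurableSet_Ico fun t ht => ENNReal.ofReal_le_ofReal <|
          (div_le_div_of_nonneg_right (hg t ht) (ha.trans_le ht.1).le).trans
            (div_le_div_of_nonneg_left hM ha ht.1)
    _ = ENNReal.ofReal M := by
        rw [setLIntegral_const, Real.volume_Ico, ← ENNReal.ofReal_mul (by positivity)]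
        congr 1
        field_simp
        ring

lemma ofReal_half_le_lintegral_Ioc_two_mul_div {g : ℝ → ℝ} {a M : ℝ} (ha : 0 < a)
    (hM : 0 ≤ M)
    (hg : ∀ t ∈ Ioc a (2 * a), M ≤ g t) :
    ENNReal.ofReal (M / 2) ≤ ∫⁻ t in Ioc a (2 * a), ENNReal.ofReal (g t / t) := by
  calc ENNReal.ofReal (M / 2)
      = ∫⁻ _ in Ioc a (2 * a), ENNReal.ofReal (M / (2 * a)) := by
        rw [setLIntegral_const, Real.volume_Ioc, ← ENNReal.ofReal_mul (by positivity)]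
        congr 1
        field_simp
        ring
    _ ≤ ∫⁻ t in Ioc a (2 * a), ENNReal.ofReal (g t / t) :=
        setLIntegral_mono' measurableSet_Ioc fun t ht => ENNReal.ofReal_le_ofReal <|
          (div_le_div_of_nonneg_left hM (ha.trans ht.1) ht.2).trans
            (div_le_div_of_nonneg_right (hg t ht) (ha.trans ht.1).le)

lemma lintegral_Ioi_div_le_of_le_geometric {g : ℝ → ℝ} {r A ρ : ℝ} (hr : 0 < r)
    (hA : 0 ≤ A) (hρ₀ : 0 ≤ ρ) (hρ₁ : ρ < 1)
    (hg : ∀ k : ℕ, ∀ t ∈ Ico (2 ^ k * r) (2 ^ (k + 1) * r), g t ≤ A * ρ ^ k) :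
    ∫⁻ t in Ioi r, ENNReal.ofReal (g t / t) ≤ ENNReal.ofReal (A / (1 - ρ)) := by
  calc ∫⁻ t in Ioi r, ENNReal.ofReal (g t / t)
      ≤ ∫⁻ t in ⋃ k : ℕ, Ico (2 ^ k * r) (2 ^ (k + 1) * r), ENNReal.ofReal (g t / t) :=
        lintegral_mono_set (Ioi_subset_iUnion_Ico_two_pow hr)
    _ ≤ ∑' k : ℕ, ∫⁻ t in Ico (2 ^ k * r) (2 ^ (k + 1) * r), ENNReal.ofReal (g t / t) :=
        lintegral_iUnion_le _ _
    _ ≤ ∑' k : ℕ, ENNReal.ofReal (A * ρ ^ k) := ENNReal.tsum_le_tsum fun k => by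
        have hblock : (2 : ℝ) ^ (k + 1) * r = 2 * (2 ^ k * r) := by ring
        have hgk := hg k
        rw [hblock] at hgk ⊢
        exact lintegral_Ico_two_mul_div_le (by positivity) (by positivity) hgk
    _ = ENNReal.ofReal (A / (1 - ρ)) := by
        rw [← ENNReal.ofReal_tsum_of_nonneg (fun k => by positivity)
          ((summable_geometric_of_lt_one hρ₀ hρ₁).mul_left A), tsum_mul_left,
          tsum_geometric_of_lt_one hρ₀ hρ₁, div_eq_mul_inv]

lemma ENNReal.le_ofReal_div_add_one_mul {a b : ENNReal} {K : ℝ} (hK : 0 ≤ K)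
    (h : a ≤ ENNReal.ofReal K * b) : a ≤ ENNReal.ofReal (K / (K + 1)) * (b + a) := by
  have hK₁ : 0 < K + 1 := by linarith
  have hmul : ENNReal.ofReal (K + 1) * a ≤ ENNReal.ofReal K * (b + a) := by
    rw [ENNReal.ofReal_add hK zero_le_one, ENNReal.ofReal_one, add_mul, one_mul, mul_add,
      add_comm (ENNReal.ofReal K * b)]
    gcongr
  rw [div_eq_mul_inv, ENNReal.ofReal_mul hK, ENNReal.ofReal_inv_of_pos hK₁, mul_comm _ (_⁻¹),
    mul_assoc, ← ENNReal.div_eq_inv_mul, ENNReal.le_div_iff_mul_le (by simp [hK₁]) (by simp),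
    mul_comm]
  exact hmul

lemma le_pow_mul_of_le_mul_two_mul {g : ℝ → ENNReal} {c : ENNReal}
    (h : ∀ s, 0 < s → g (2 * s) ≤ c * g s) {s : ℝ} (hs : 0 < s) :
    ∀ k : ℕ, g (2 ^ k * s) ≤ c ^ k * g s
  | 0 => by simp
  | k + 1 => by
    calc g (2 ^ (k + 1) * s) = g (2 * (2 ^ k * s)) := by ring_nf
      _ ≤ c * g (2 ^ k * s) := h _ (by positivity)
      _ ≤ c * (c ^ k * g s) := by gcongr; exact le_pow_mul_of_le_mul_two_mul h hs k
      _ = c ^ (k + 1) * g s := by ring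

section Doubling

variable {f : ℝ → ℝ} {C : ℝ}

lemma ofReal_le_two_mul_lintegral_Ioc (hf : ∀ t, 0 < t → 0 < f t) (hC : 0 < C)
    (hd : ∀ r s, 0 < r → 0 < s → r ≤ 2 * s → s ≤ 2 * r → f r ≤ C * f s)
    {s : ℝ} (hs : 0 < s) :
    ENNReal.ofReal (f s) ≤
      ENNReal.ofReal (2 * C) * ∫⁻ t in Ioc s (2 * s), ENNReal.ofReal (f t / t) := by
  have hblock : ∀ t ∈ Ioc s (2 * s), f s / C ≤ f t := fun t ht =>
    (div_le_iff₀' hC).2 (hd s t hs (hs.trans ht.1) (by linarith [ht.1]) ht.2)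
  calc ENNReal.ofReal (f s) = ENNReal.ofReal (2 * C) * ENNReal.ofReal (f s / C / 2) := by
        rw [← ENNReal.ofReal_mul (by positivity)]
        congr 1
        field_simp
    _ ≤ _ := by
        gcongr
        exact ofReal_half_le_lintegral_Ioc_two_mul_div hs (div_nonneg (hf s hs).le hC.le) hblock

lemma lintegral_Ioi_two_mul_le (hf : ∀ t, 0 < t → 0 < f t) (hC : 0 < C)
    (hd : ∀ r s, 0 < r → 0 < s → r ≤ 2 * s → s ≤ 2 * r → f r ≤ C * f s)
    (hint : ∀ r, 0 < r →
      ∫⁻ t in Ioi r, ENNReal.ofReal (f t / t) ≤ ENNReal.ofReal (C * f r))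
    {s : ℝ} (hs : 0 < s) :
    ∫⁻ t in Ioi (2 * s), ENNReal.ofReal (f t / t) ≤
      ENNReal.ofReal (2 * C ^ 3 / (2 * C ^ 3 + 1)) *
        ∫⁻ t in Ioi s, ENNReal.ofReal (f t / t) := by
  rw [← Ioc_union_Ioi_eq_Ioi (by linarith : s ≤ 2 * s),
    lintegral_union measurableSet_Ioi (Ioc_disjoint_Ioi le_rfl)]
  refine ENNReal.le_ofReal_div_add_one_mul (by positivity) ?_
  calc ∫⁻ t in Ioi (2 * s), ENNReal.ofReal (f t / t)
      ≤ ENNReal.ofReal (C * f (2 * s)) := hint _ (by positivity)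
    _ ≤ ENNReal.ofReal (C ^ 2) * ENNReal.ofReal (f s) := by
        rw [← ENNReal.ofReal_mul (by positivity), pow_two, mul_assoc]
        exact ENNReal.ofReal_le_ofReal <| mul_le_mul_of_nonneg_left
          (hd (2 * s) s (by positivity) hs le_rfl (by linarith)) hC.le
    _ ≤ ENNReal.ofReal (C ^ 2) *
          (ENNReal.ofReal (2 * C) * ∫⁻ t in Ioc s (2 * s), ENNReal.ofReal (f t / t)) := by
        gcongr
        exact ofReal_le_two_mul_lintegral_Ioc hf hC hd hs
    _ = _ := by
        rw [← mul_assoc, ← ENNReal.ofReal_mul (by positivity)]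
        ring_nf

lemma le_geometric_of_lintegral_Ioi_two_mul_le (hf : ∀ t, 0 < t → 0 < f t) (hC : 0 < C)
    (hd : ∀ r s, 0 < r → 0 < s → r ≤ 2 * s → s ≤ 2 * r → f r ≤ C * f s)
    (hint : ∀ r, 0 < r →
      ∫⁻ t in Ioi r, ENNReal.ofReal (f t / t) ≤ ENNReal.ofReal (C * f r))
    {θ : ℝ} (hθ : 0 ≤ θ)
    (hcontr : ∀ s, 0 < s → ∫⁻ t in Ioi (2 * s), ENNReal.ofReal (f t / t) ≤
      ENNReal.ofReal θ * ∫⁻ t in Ioi s, ENNReal.ofReal (f t / t))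
    {r : ℝ} (hr : 0 < r) (k : ℕ) :
    f (2 ^ k * r) ≤ 2 * C ^ 2 * θ ^ k * f r := by
  have hkr : 0 < 2 ^ k * r := by positivity
  refine (ENNReal.ofReal_le_ofReal_iff (by have := hf r hr; positivity)).1 ?_
  calc ENNReal.ofReal (f (2 ^ k * r))
      ≤ ENNReal.ofReal (2 * C) *
          ∫⁻ t in Ioc (2 ^ k * r) (2 * (2 ^ k * r)), ENNReal.ofReal (f t / t) :=
        ofReal_le_two_mul_lintegral_Ioc hf hC hd hkr
    _ ≤ ENNReal.ofReal (2 * C) * ∫⁻ t in Ioi (2 ^ k * r), ENNReal.ofReal (f t / t) := by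
        gcongr
        exact Ioc_subset_Ioi_self
    _ ≤ ENNReal.ofReal (2 * C) *
          (ENNReal.ofReal θ ^ k * ∫⁻ t in Ioi r, ENNReal.ofReal (f t / t)) := by
        gcongr
        exact le_pow_mul_of_le_mul_two_mul
          (g := fun s => ∫⁻ t in Ioi s, ENNReal.ofReal (f t / t)) hcontr hr k
    _ ≤ ENNReal.ofReal (2 * C) * (ENNReal.ofReal θ ^ k * ENNReal.ofReal (C * f r)) := by
        gcongr
        exact hint r hr
    _ = ENNReal.ofReal (2 * C ^ 2 * θ ^ k * f r) := by
        rw [← ENNReal.ofReal_pow hθ, ← ENNReal.ofReal_mul (by positivity),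
          ← ENNReal.ofReal_mul (by positivity)]
        ring_nf

lemma rpow_le_geometric_of_mem_Ico (hf : ∀ t, 0 < t → 0 < f t) (hC : 0 ≤ C)
    (hd : ∀ r s, 0 < r → 0 < s → r ≤ 2 * s → s ≤ 2 * r → f r ≤ C * f s)
    {A θ q r : ℝ} (hA : 0 ≤ A) (hθ : 0 ≤ θ) (hq : 0 ≤ q) (hr : 0 < r)
    (hdecay : ∀ k : ℕ, f (2 ^ k * r) ≤ A * θ ^ k * f r)
    (k : ℕ) {t : ℝ} (ht : t ∈ Ico (2 ^ k * r) (2 ^ (k + 1) * r)) :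
    f t ^ q ≤ (C * A * f r) ^ q * (θ ^ q) ^ k := by
  have hkr : 0 < 2 ^ k * r := by positivity
  have hft : f t ≤ C * A * f r * θ ^ k := calc
    f t ≤ C * f (2 ^ k * r) :=
      hd t _ (hkr.trans_le ht.1) hkr (by linarith [pow_succ (2 : ℝ) k ▸ ht.2])
        (by linarith [ht.1])
    _ ≤ C * (A * θ ^ k * f r) := by gcongr; exact hdecay k
    _ = C * A * f r * θ ^ k := by ring
  have hfr := hf r hr
  rw [Real.rpow_pow_comm hθ, ← Real.mul_rpow (by positivity) (by positivity)]
  exact Real.rpow_le_rpow (hf t (hkr.trans_le ht.1)).le hft hq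

end Doubling

/-- if `φ` is doubling and satisfies `∫_r^∞ φ(x,t)/t dt ≤ C φ(x,r)`,
then for every `p ∈ (0,∞)` there is `C_p` with
`∫_r^∞ φ(x,t)^{1/p}/t dt ≤ C_p φ(x,r)^{1/p}`. -/
theorem integral_rpow_le_of_doubling_of_integral_le
    (n : ℕ) (φ : EuclideanSpace ℝ (Fin n) → ℝ → ℝ)
    (hφpos : ∀ x r, 0 < r → 0 < φ x r)
    (C : ℝ) (hC : 0 < C)
    (hdoub : ∀ x (r s : ℝ), 0 < r → 0 < s → 1 / 2 ≤ r / s → r / s ≤ 2 →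
      C⁻¹ ≤ φ x r / φ x s ∧ φ x r / φ x s ≤ C)
    (hint : ∀ x (r : ℝ), 0 < r →
      ∫⁻ t in Set.Ioi r, ENNReal.ofReal (φ x t / t) ≤ ENNReal.ofReal (C * φ x r)) :
    ∀ p : ℝ, 0 < p → ∃ Cp : ℝ, 0 < Cp ∧ ∀ x (r : ℝ), 0 < r →
      ∫⁻ t in Set.Ioi r, ENNReal.ofReal (φ x t ^ (1 / p) / t)
        ≤ ENNReal.ofReal (Cp * φ x r ^ (1 / p)) := by
  intro p hp
  set q := 1 / p
  set θ : ℝ := 2 * C ^ 3 / (2 * C ^ 3 + 1)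
  have hq : 0 < q := by positivity
  have hθ₀ : 0 ≤ θ := by positivity
  have hθ₁ : θ < 1 := (div_lt_one (by positivity)).2 (by linarith)
  have hθq : θ ^ q < 1 := Real.rpow_lt_one hθ₀ hθ₁ hq
  refine ⟨(C * (2 * C ^ 2)) ^ q / (1 - θ ^ q), div_pos (by positivity) (by linarith),
    fun x r hr => ?_⟩
  have hd : ∀ r s, 0 < r → 0 < s → r ≤ 2 * s → s ≤ 2 * r → φ x r ≤ C * φ x s :=
    fun r s hr hs h₁ h₂ => (div_le_iff₀ (hφpos x s hs)).1 (hdoub x r s hr hs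
      (by rw [le_div_iff₀ hs]; linarith) (by rw [div_le_iff₀ hs]; linarith)).2
  have hφr : 0 < φ x r := hφpos x r hr
  have hdecay := le_geometric_of_lintegral_Ioi_two_mul_le (hφpos x) hC hd (hint x) hθ₀
    (fun s hs => lintegral_Ioi_two_mul_le (hφpos x) hC hd (hint x) hs) hr
  calc ∫⁻ t in Set.Ioi r, ENNReal.ofReal (φ x t ^ q / t)
      ≤ ENNReal.ofReal ((C * (2 * C ^ 2) * φ x r) ^ q / (1 - θ ^ q)) :=
        lintegral_Ioi_div_le_of_le_geometric hr (by positivity) (by positivity) hθq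
          fun k _ => rpow_le_geometric_of_mem_Ico (hφpos x) hC.le hd (by positivity) hθ₀
            hq.le hr hdecay k
    _ = ENNReal.ofReal ((C * (2 * C ^ 2)) ^ q / (1 - θ ^ q) * φ x r ^ q) := by
        rw [Real.mul_rpow (by positivity) hφr.le]
        ring_nf
end

section
/- Let 1 < p < q < ∞, p_i ∈ (1,∞) with ∑_{i=1}^m 1/p_i = 1/p, and ρ, φ, φ_i : ℝⁿ×(0,∞) → (0,∞) with ∏_{i=1}^m φ_i^{1/p_i} = φ^{1/p} and ρ(x,r)φ(x,r)^{1/p} ≤ C₀ φ(x,r)^{1/q} for all x, r. Assume that for each x ∈ ℝⁿ, φ(x,·) is continuous, strictly decreasing, and a bijection from (0,∞) onto itself. Then for all f_i with ‖f_i‖_{L^{(p_i,φ_i)}} = 1 (i = 1,…,m) and all x ∈ ℝⁿ, one has the pointwise estimate 𝓜_ρ(f⃗)(x) ≤ C₀ 𝓜(f⃗)(x)^{p/q}. -/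
/-! On a ball `B = B(z, r)`, Hölder's inequality and `‖fᵢ‖_{L^{(pᵢ,φᵢ)}} ≤ 1` give
`⨍_B |fᵢ| ≤ φᵢ(z, r)^{1/pᵢ}`, so the product `A` of the averages is at most `φ(z, r)^{1/p}`.
Splitting `A = A^{1-p/q} A^{p/q}` and bounding the first factor this way,
`ρ(z, r) A ≤ ρ(z, r) φ(z, r)^{1/p - 1/q} A^{p/q} ≤ C₀ A^{p/q}`, while `A ≤ 𝓜(f⃗)(x)` when `x ∈ B`. -/

open MeasureTheory Metric ENNReal

/-- The generalized Morrey norm of a real function. -/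
noncomputable def morreyNorm (n : ℕ) (p : ℝ)
    (φ : EuclideanSpace ℝ (Fin n) → ℝ → ℝ) (f : EuclideanSpace ℝ (Fin n) → ℝ) : ℝ≥0∞ :=
  ⨆ (x : EuclideanSpace ℝ (Fin n)) (r : ℝ) (_ : 0 < r),
    ((∫⁻ y in ball x r, ENNReal.ofReal (|f y| ^ p)) /
      (ENNReal.ofReal (φ x r) * volume (ball x r))) ^ (1 / p)

/-- The generalized `m`-linear maximal operator
`𝓜_ρ(f⃗)(x) = sup_{B ∋ x} ρ(B) ∏ᵢ ⨍_B |fᵢ|`. -/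
noncomputable def genMultiMaximal (n m : ℕ) (ρ : EuclideanSpace ℝ (Fin n) → ℝ → ℝ)
    (f : Fin m → EuclideanSpace ℝ (Fin n) → ℝ) (x : EuclideanSpace ℝ (Fin n)) : ℝ≥0∞ :=
  ⨆ (z : EuclideanSpace ℝ (Fin n)) (r : ℝ) (_ : 0 < r) (_ : x ∈ ball z r),
    ENNReal.ofReal (ρ z r) *
      ∏ i, (∫⁻ y in ball z r, ENNReal.ofReal |f i y|) / volume (ball z r)

theorem lintegral_le_lintegral_rpow_mul_measure_univ {α : Type*} [MeasurableSpace α]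
    {μ : Measure α} {p : ℝ} (hp : 1 ≤ p) {g : α → ℝ≥0∞} (hg : AEMeasurable g μ) :
    ∫⁻ a, g a ∂μ ≤ (∫⁻ a, g a ^ p ∂μ) ^ (1 / p) * μ Set.univ ^ (1 - 1 / p) := by
  simpa [eLpNorm'] using
    eLpNorm'_le_eLpNorm'_mul_rpow_measure_univ one_pos hp hg.aestronglyMeasurable

theorem setLIntegral_div_measure_le_rpow {α : Type*} [MeasurableSpace α]
    {μ : Measure α} {s : Set α} {p : ℝ} (hp : 1 ≤ p) {g : α → ℝ≥0∞}
    (hg : AEMeasurable g (μ.restrict s)) {c : ℝ≥0∞}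
    (h : ∫⁻ a in s, g a ^ p ∂μ ≤ c * μ s) :
    (∫⁻ a in s, g a ∂μ) / μ s ≤ c ^ (1 / p) := by
  have hp₀ : 0 ≤ 1 / p := by positivity
  have hp₁ : 0 ≤ 1 - 1 / p := sub_nonneg.2 ((div_le_one (by linarith)).2 hp)
  refine ENNReal.div_le_of_le_mul ?_
  calc ∫⁻ a in s, g a ∂μ
      ≤ (∫⁻ a in s, g a ^ p ∂μ) ^ (1 / p) * μ s ^ (1 - 1 / p) := by
        simpa using lintegral_le_lintegral_rpow_mul_measure_univ hp hg
    _ ≤ (c * μ s) ^ (1 / p) * μ s ^ (1 - 1 / p) := by gcongr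
    _ = c ^ (1 / p) * μ s := by
        rw [ENNReal.mul_rpow_of_nonneg _ _ hp₀, mul_assoc,
          ← ENNReal.rpow_add_of_nonneg _ _ hp₀ hp₁, add_sub_cancel, ENNReal.rpow_one]

theorem lintegral_rpow_le_of_morreyNorm_le_one {n : ℕ} {p : ℝ} (hp : 0 < p)
    {φ : EuclideanSpace ℝ (Fin n) → ℝ → ℝ} {f : EuclideanSpace ℝ (Fin n) → ℝ}
    (hf : morreyNorm n p φ f ≤ 1) {x : EuclideanSpace ℝ (Fin n)} {r : ℝ} (hr : 0 < r) :
    ∫⁻ y in ball x r, ENNReal.ofReal (|f y| ^ p)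
      ≤ ENNReal.ofReal (φ x r) * volume (ball x r) := by
  have h : ((∫⁻ y in ball x r, ENNReal.ofReal (|f y| ^ p)) /
      (ENNReal.ofReal (φ x r) * volume (ball x r))) ^ (1 / p) ≤ 1 ^ (1 / p) := by
    rw [ENNReal.one_rpow]
    refine le_trans ?_ hf
    unfold morreyNorm
    exact le_iSup₂_of_le x r (le_iSup_of_le hr le_rfl)
  rwa [ENNReal.rpow_le_rpow_iff (by positivity),
    ENNReal.div_le_iff_le_mul (Or.inr ENNReal.one_ne_top) (Or.inr one_ne_zero), one_mul] at h

theorem setLIntegral_div_measure_le_of_morreyNorm_le_one {n : ℕ} {p : ℝ} (hp : 1 < p)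
    {φ : EuclideanSpace ℝ (Fin n) → ℝ → ℝ} {f : EuclideanSpace ℝ (Fin n) → ℝ}
    (hfm : Measurable f) (hf : morreyNorm n p φ f ≤ 1)
    {x : EuclideanSpace ℝ (Fin n)} {r : ℝ} (hr : 0 < r) :
    (∫⁻ y in ball x r, ENNReal.ofReal |f y|) / volume (ball x r)
      ≤ ENNReal.ofReal (φ x r) ^ (1 / p) := by
  refine setLIntegral_div_measure_le_rpow hp.le (by fun_prop) ?_
  have hpow (y) : ENNReal.ofReal |f y| ^ p = ENNReal.ofReal (|f y| ^ p) :=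
    ENNReal.ofReal_rpow_of_nonneg (abs_nonneg _) (by linarith)
  simpa only [hpow] using lintegral_rpow_le_of_morreyNorm_le_one (by linarith) hf hr

theorem prod_setLIntegral_div_measure_le_of_morreyNorm_le_one {n : ℕ} {ι : Type*} [Fintype ι]
    {pp : ι → ℝ} (hpp : ∀ i, 1 < pp i) {φi : ι → EuclideanSpace ℝ (Fin n) → ℝ → ℝ}
    {f : ι → EuclideanSpace ℝ (Fin n) → ℝ} (hfm : ∀ i, Measurable (f i))
    (hf : ∀ i, morreyNorm n (pp i) (φi i) (f i) ≤ 1)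
    {x : EuclideanSpace ℝ (Fin n)} {r : ℝ} (hr : 0 < r) (hφi : ∀ i, 0 ≤ φi i x r) :
    ∏ i, (∫⁻ y in ball x r, ENNReal.ofReal |f i y|) / volume (ball x r)
      ≤ ENNReal.ofReal (∏ i, φi i x r ^ (1 / pp i)) := by
  rw [ENNReal.ofReal_prod_of_nonneg fun i _ => Real.rpow_nonneg (hφi i) _]
  refine Finset.prod_le_prod' fun i _ => ?_
  rw [← ENNReal.ofReal_rpow_of_nonneg (hφi i) (one_div_pos.2 (by linarith [hpp i])).le]
  exact setLIntegral_div_measure_le_of_morreyNorm_le_one (hpp i) (hfm i) (hf i) hr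

theorem le_genMultiMaximal {n m : ℕ} {ρ : EuclideanSpace ℝ (Fin n) → ℝ → ℝ}
    {f : Fin m → EuclideanSpace ℝ (Fin n) → ℝ} {x z : EuclideanSpace ℝ (Fin n)} {r : ℝ}
    (hr : 0 < r) (hx : x ∈ ball z r) :
    ENNReal.ofReal (ρ z r) * ∏ i, (∫⁻ y in ball z r, ENNReal.ofReal |f i y|) / volume (ball z r)
      ≤ genMultiMaximal n m ρ f x := by
  unfold genMultiMaximal
  exact le_iSup₂_of_le z r (le_iSup₂_of_le hr hx le_rfl)

theorem mul_rpow_sub_le_of_mul_rpow_le {ρ t C a b : ℝ} (ht : 0 < t)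
    (h : ρ * t ^ a ≤ C * t ^ b) : ρ * t ^ (a - b) ≤ C := by
  rwa [Real.rpow_sub ht, ← mul_div_assoc, div_le_iff₀ (Real.rpow_pos_of_pos ht b)]

theorem ENNReal.mul_le_mul_rpow_of_le_rpow_of_le {ρ C A M t : ℝ≥0∞} {p q : ℝ} (hp : 0 < p)
    (hpq : p ≤ q) (hAt : A ≤ t ^ (1 / p)) (hAM : A ≤ M) (hρ : ρ * t ^ (1 / p - 1 / q) ≤ C) :
    ρ * A ≤ C * M ^ (p / q) := by
  have hq : 0 < q := hp.trans_le hpq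
  have hθ : 0 ≤ p / q := by positivity
  have hθ' : 0 ≤ 1 - p / q := sub_nonneg.2 ((div_le_one hq).2 hpq)
  calc ρ * A = ρ * (A ^ (1 - p / q) * A ^ (p / q)) := by
        rw [← ENNReal.rpow_add_of_nonneg _ _ hθ' hθ, sub_add_cancel, ENNReal.rpow_one]
    _ ≤ ρ * ((t ^ (1 / p)) ^ (1 - p / q) * M ^ (p / q)) := by gcongr
    _ = ρ * t ^ (1 / p - 1 / q) * M ^ (p / q) := by
        rw [← ENNReal.rpow_mul, ← mul_assoc]
        congr 3
        field_simp
    _ ≤ C * M ^ (p / q) := by gcongr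

theorem genMultiMaximal_pointwise_general (n m : ℕ) (p q : ℝ) (pp : Fin m → ℝ)
    (hp : 1 < p) (hpq : p < q) (hpp : ∀ i, 1 < pp i)
    (ρ φ : EuclideanSpace ℝ (Fin n) → ℝ → ℝ)
    (φi : Fin m → EuclideanSpace ℝ (Fin n) → ℝ → ℝ)
    (hφpos : ∀ x r, 0 < r → 0 < φ x r)
    (hφipos : ∀ i x r, 0 < r → 0 < φi i x r)
    (hprod : ∀ x (r : ℝ), 0 < r → ∏ i, φi i x r ^ (1 / pp i) = φ x r ^ (1 / p))
    (C₀ : ℝ)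
    (hρφ : ∀ x (r : ℝ), 0 < r → ρ x r * φ x r ^ (1 / p) ≤ C₀ * φ x r ^ (1 / q)) :
    ∀ f : Fin m → EuclideanSpace ℝ (Fin n) → ℝ,
      (∀ i, Measurable (f i)) →
      (∀ i, morreyNorm n (pp i) (φi i) (f i) = 1) →
      ∀ x, genMultiMaximal n m ρ f x
        ≤ ENNReal.ofReal C₀ * (genMultiMaximal n m (fun _ _ => 1) f x) ^ (p / q) := by
  intro f hfm hfnorm x
  refine iSup₂_le fun z r => iSup₂_le fun hr hx => ?_
  have hφ := hφpos z r hr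
  refine ENNReal.mul_le_mul_rpow_of_le_rpow_of_le (t := ENNReal.ofReal (φ z r)) (by linarith)
    hpq.le ?_ ?_ ?_
  · rw [ENNReal.ofReal_rpow_of_pos hφ, ← hprod z r hr]
    exact prod_setLIntegral_div_measure_le_of_morreyNorm_le_one hpp hfm (fun i => (hfnorm i).le)
      hr fun i => (hφipos i z r hr).le
  · simpa using le_genMultiMaximal (ρ := fun _ _ => 1) hr hx
  · rw [ENNReal.ofReal_rpow_of_pos hφ, ← ENNReal.ofReal_mul' (by positivity)]
    exact ENNReal.ofReal_le_ofReal (mul_rpow_sub_le_of_mul_rpow_le hφ (hρφ z r hr))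

/-- pointwise estimate `𝓜_ρ(f⃗)(x) ≤ C₀ 𝓜(f⃗)(x)^{p/q}` for
functions with unit Morrey norms. -/
theorem genMultiMaximal_pointwise (n m : ℕ) (p q : ℝ) (pp : Fin m → ℝ)
    (hp : 1 < p) (hpq : p < q) (hq : 1 < q) (hpp : ∀ i, 1 < pp i)
    (hsum : ∑ i, 1 / pp i = 1 / p)
    (ρ φ : EuclideanSpace ℝ (Fin n) → ℝ → ℝ)
    (φi : Fin m → EuclideanSpace ℝ (Fin n) → ℝ → ℝ)
    (hρpos : ∀ x r, 0 < r → 0 < ρ x r)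
    (hφpos : ∀ x r, 0 < r → 0 < φ x r)
    (hφipos : ∀ i x r, 0 < r → 0 < φi i x r)
    (hprod : ∀ x (r : ℝ), 0 < r → ∏ i, φi i x r ^ (1 / pp i) = φ x r ^ (1 / p))
    (C₀ : ℝ) (hC₀ : 0 < C₀)
    (hρφ : ∀ x (r : ℝ), 0 < r → ρ x r * φ x r ^ (1 / p) ≤ C₀ * φ x r ^ (1 / q))
    (hφcont : ∀ x, ContinuousOn (fun r => φ x r) (Set.Ioi 0))
    (hφanti : ∀ x, StrictAntiOn (fun r => φ x r) (Set.Ioi 0))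
    (hφbij : ∀ x, Set.BijOn (fun r => φ x r) (Set.Ioi 0) (Set.Ioi 0)) :
    ∀ f : Fin m → EuclideanSpace ℝ (Fin n) → ℝ,
      (∀ i, Measurable (f i)) →
      (∀ i, morreyNorm n (pp i) (φi i) (f i) = 1) →
      ∀ x, genMultiMaximal n m ρ f x
        ≤ ENNReal.ofReal C₀ * (genMultiMaximal n m (fun _ _ => 1) f x) ^ (p / q) :=
  genMultiMaximal_pointwise_general n m p q pp hp hpq hpp ρ φ φi hφpos hφipos hprod C₀ hρφ
end

section
/- Let 1 < p ≤ q < ∞, let φ ∈ 𝒢^dec satisfy the doubling condition and ∫_r^∞ φ(x,t)/t dt ≤ C φ(x,r) for all x ∈ ℝⁿ and r > 0, and let ψ : ℝⁿ×(0,∞) → (0,∞) satisfy ψ(x,r)φ(x,r)^{1/p} ≤ C₀ φ(x,r)^{1/q} for all x, r. Then there is a constant C' such that for all z ∈ ℝⁿ and r > 0: ∫_r^∞ (ψ(z,t)/t) ( ∫_t^∞ φ(z,u)^{1/p}/u du ) dt ≤ C' φ(z,r)^{1/q}. -/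
/-
Membership in `𝒢^dec` makes each `φ(z, ·)` quasi-decreasing, `φ(z,s) ≤ C_d φ(z,r)` for `r < s`.
Cutting `∫_r^∞ φ(z,u)/u du ≤ C φ(z,r)` into the dyadic pieces `(2^j r, 2^{j+1} r]` therefore gives
`∑_{j>k} φ(z, 2^j r) ≤ 2 C_d C φ(z, 2^k r)`, and such a tail bound forces geometric decay
`φ(z, 2^k r) ≤ A ρ^k φ(z,r)` with `ρ = 2C_dC/(2C_dC+1) < 1`. For every `θ > 0` the dyadic pieces of
`∫_t^∞ φ(z,u)^θ/u du` are then dominated by a geometric series, so this integral is at most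
`K_θ φ(z,t)^θ`. With `θ = 1/p` this bounds the inner integral; the hypothesis on `ψ` turns the outer
integrand into `K_{1/p} C₀ φ(z,t)^{1/q}/t`, and the case `θ = 1/q` finishes.
-/

open MeasureTheory Metric ENNReal

/-- `φ ∈ 𝒢^dec`. -/
def Gdec (n : ℕ) (φ : EuclideanSpace ℝ (Fin n) → ℝ → ℝ) : Prop :=
  ∃ C > (0 : ℝ), ∀ x (r s : ℝ), 0 < r → r < s →
    φ x s ≤ C * φ x r ∧ φ x r * r ^ (n : ℝ) ≤ C * (φ x s * s ^ (n : ℝ))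

/-- Doubling condition. -/
def DoublingCond (n : ℕ) (φ : EuclideanSpace ℝ (Fin n) → ℝ → ℝ) : Prop :=
  ∃ C > (0 : ℝ), ∀ x (r s : ℝ), 0 < r → 0 < s → 1 / 2 ≤ r / s → r / s ≤ 2 →
    C⁻¹ ≤ φ x r / φ x s ∧ φ x r / φ x s ≤ C

open Set

lemma lintegral_Ioi_eq_tsum_Ioc_two_pow_mul (g : ℝ → ℝ≥0∞) {s : ℝ} (hs : 0 < s) :
    ∫⁻ u in Ioi s, g u = ∑' j : ℕ, ∫⁻ u in Ioc (2 ^ j * s) (2 * (2 ^ j * s)), g u := by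
  have hmono : Monotone fun j : ℕ ↦ (2 : ℝ) ^ j * s := fun _ _ hij ↦
    mul_le_mul_of_nonneg_right (pow_le_pow_right₀ one_le_two hij) hs.le
  have hunbdd : ¬BddAbove (range fun j : ℕ ↦ (2 : ℝ) ^ j * s) :=
    Filter.not_bddAbove_of_tendsto_atTop
      ((tendsto_pow_atTop_atTop_of_one_lt _root_.one_lt_two).atTop_mul_const hs)
  have hunion := iUnion_Ioc_map_succ_eq_Ioi (fun j ↦ hmono (Nat.zero_le j)) hunbdd
  simp only [Order.succ_eq_add_one, Nat.bot_eq_zero, pow_zero, one_mul] at hunion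
  have hdisj : Pairwise (Function.onFun Disjoint fun j : ℕ ↦ Ioc (2 ^ j * s) (2 ^ (j + 1) * s)) :=
    hmono.pairwise_disjoint_on_Ioc_succ
  rw [← hunion, lintegral_iUnion (fun _ ↦ measurableSet_Ioc) hdisj]
  simp only [pow_succ, mul_comm, mul_left_comm]

lemma setLIntegral_Ioc_two_mul_le {g : ℝ → ℝ} {a c : ℝ} (ha : 0 < a) (hc : 0 ≤ c)
    (hg : ∀ u ∈ Ioc a (2 * a), g u ≤ c) :
    ∫⁻ u in Ioc a (2 * a), ENNReal.ofReal (g u / u) ≤ ENNReal.ofReal c :=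
  calc ∫⁻ u in Ioc a (2 * a), ENNReal.ofReal (g u / u)
      ≤ ∫⁻ _ in Ioc a (2 * a), ENNReal.ofReal (c / a) :=
        setLIntegral_mono' measurableSet_Ioc fun u hu ↦
          ENNReal.ofReal_le_ofReal (div_le_div₀ hc (hg u hu) ha hu.1.le)
    _ = ENNReal.ofReal c := by
        rw [setLIntegral_const, Real.volume_Ioc, ← ENNReal.ofReal_mul (by positivity)]
        congr 1
        field_simp
        ring

lemma ofReal_half_le_setLIntegral_Ioc_two_mul {g : ℝ → ℝ} {a c : ℝ} (ha : 0 < a) (hc : 0 ≤ c)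
    (hg : ∀ u ∈ Ioc a (2 * a), c ≤ g u) :
    ENNReal.ofReal (c / 2) ≤ ∫⁻ u in Ioc a (2 * a), ENNReal.ofReal (g u / u) :=
  calc ENNReal.ofReal (c / 2) = ∫⁻ _ in Ioc a (2 * a), ENNReal.ofReal (c / (2 * a)) := by
        rw [setLIntegral_const, Real.volume_Ioc, ← ENNReal.ofReal_mul (by positivity)]
        congr 1
        field_simp
        ring
    _ ≤ ∫⁻ u in Ioc a (2 * a), ENNReal.ofReal (g u / u) :=
        setLIntegral_mono' measurableSet_Ioc fun u hu ↦ ENNReal.ofReal_le_ofReal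
          (div_le_div₀ (hc.trans (hg u hu)) (hg u hu) (ha.trans hu.1) hu.2)

lemma le_geometric_of_tsum_tail_le {b : ℕ → ℝ≥0∞} {M : ℝ≥0∞} (hM : M ≠ ∞)
    (htail : ∀ k, ∑' j, b (k + 1 + j) ≤ M * b k) (k : ℕ) :
    b k ≤ (M / (M + 1)) ^ k * ((1 + M) * b 0) := by
  set T : ℕ → ℝ≥0∞ := fun k ↦ ∑' j, b (k + j)
  have hT : ∀ k, T k = b k + ∑' j, b (k + 1 + j) := fun k ↦ by
    show ∑' j, b (k + j) = _
    rw [tsum_eq_zero_add' ENNReal.summable, add_zero]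
    exact congrArg _ (tsum_congr fun j ↦ congrArg b (by omega))
  have hstep : ∀ k, T (k + 1) ≤ M / (M + 1) * T k := fun k ↦ by
    rw [div_eq_mul_inv, mul_right_comm, ← div_eq_mul_inv,
      ENNReal.le_div_iff_mul_le (by simp) (by simp [hM]), hT k]
    calc T (k + 1) * (M + 1) = M * T (k + 1) + T (k + 1) := by ring
      _ ≤ M * T (k + 1) + M * b k := by gcongr; exact htail k
      _ = M * (b k + T (k + 1)) := by ring
  have hpow : T k ≤ (M / (M + 1)) ^ k * T 0 := by
    induction k with
    | zero => simp
    | succ k ih => calc T (k + 1) ≤ M / (M + 1) * T k := hstep k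
        _ ≤ M / (M + 1) * ((M / (M + 1)) ^ k * T 0) := by gcongr
        _ = _ := by ring
  calc b k ≤ T k := by simpa using ENNReal.le_tsum (f := fun j ↦ b (k + j)) 0
    _ ≤ (M / (M + 1)) ^ k * T 0 := hpow
    _ ≤ (M / (M + 1)) ^ k * ((1 + M) * b 0) := by
        gcongr
        calc T 0 = b 0 + ∑' j, b (0 + 1 + j) := hT 0
          _ ≤ b 0 + M * b 0 := by gcongr; exact htail 0
          _ = (1 + M) * b 0 := by ring

section QuasiDecreasing

variable {f : ℝ → ℝ} {Cd : ℝ}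

lemma ofReal_le_mul_setLIntegral_Ioc_two_mul (hCd : 1 ≤ Cd) (hf : ∀ r, 0 < r → 0 < f r)
    (hdec : ∀ r s, 0 < r → r < s → f s ≤ Cd * f r) {a : ℝ} (ha : 0 < a) :
    ENNReal.ofReal (f (2 * a)) ≤
      ENNReal.ofReal (2 * Cd) * ∫⁻ u in Ioc a (2 * a), ENNReal.ofReal (f u / u) := by
  have hlow : ∀ u ∈ Ioc a (2 * a), f (2 * a) / Cd ≤ f u := fun u hu ↦ by
    have hu0 : 0 < u := ha.trans hu.1
    rw [div_le_iff₀' (by linarith)]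
    rcases hu.2.lt_or_eq with hlt | rfl
    · exact hdec u _ hu0 hlt
    · exact le_mul_of_one_le_left (hf _ hu0).le hCd
  calc ENNReal.ofReal (f (2 * a))
        = ENNReal.ofReal (2 * Cd) * ENNReal.ofReal (f (2 * a) / Cd / 2) := by
        rw [← ENNReal.ofReal_mul (by linarith)]
        congr 1
        field_simp
    _ ≤ _ := by
        gcongr
        exact ofReal_half_le_setLIntegral_Ioc_two_mul ha
          (div_nonneg (hf _ (by linarith)).le (by linarith)) hlow

lemma tsum_ofReal_apply_two_pow_mul_le (hCd : 1 ≤ Cd) (hf : ∀ r, 0 < r → 0 < f r)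
    (hdec : ∀ r s, 0 < r → r < s → f s ≤ Cd * f r) {C : ℝ}
    (hint : ∀ r, 0 < r → ∫⁻ t in Ioi r, ENNReal.ofReal (f t / t) ≤ ENNReal.ofReal (C * f r))
    {r : ℝ} (hr : 0 < r) (k : ℕ) :
    ∑' j, ENNReal.ofReal (f (2 ^ (k + 1 + j) * r)) ≤
      ENNReal.ofReal (2 * Cd * C) * ENNReal.ofReal (f (2 ^ k * r)) := by
  have hk : 0 < 2 ^ k * r := by positivity
  calc ∑' j, ENNReal.ofReal (f (2 ^ (k + 1 + j) * r))
      = ∑' j : ℕ, ENNReal.ofReal (f (2 * (2 ^ j * (2 ^ k * r)))) := by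
        simp only [pow_add, pow_one]
        ring_nf
    _ ≤ ∑' j : ℕ, ENNReal.ofReal (2 * Cd) *
          ∫⁻ u in Ioc (2 ^ j * (2 ^ k * r)) (2 * (2 ^ j * (2 ^ k * r))), ENNReal.ofReal (f u / u) :=
        ENNReal.tsum_le_tsum fun j ↦
          ofReal_le_mul_setLIntegral_Ioc_two_mul hCd hf hdec (by positivity)
    _ = ENNReal.ofReal (2 * Cd) * ∫⁻ u in Ioi (2 ^ k * r), ENNReal.ofReal (f u / u) := by
        rw [ENNReal.tsum_mul_left, lintegral_Ioi_eq_tsum_Ioc_two_pow_mul _ hk]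
    _ ≤ ENNReal.ofReal (2 * Cd) * ENNReal.ofReal (C * f (2 ^ k * r)) := by
        gcongr
        exact hint _ hk
    _ = ENNReal.ofReal (2 * Cd * C) * ENNReal.ofReal (f (2 ^ k * r)) := by
        rw [← ENNReal.ofReal_mul (by linarith), ← ENNReal.ofReal_mul' (hf _ hk).le]
        ring_nf

lemma apply_two_pow_mul_le_geometric (hCd : 1 ≤ Cd) (hf : ∀ r, 0 < r → 0 < f r)
    (hdec : ∀ r s, 0 < r → r < s → f s ≤ Cd * f r) {C : ℝ} (hC : 0 ≤ C)
    (hint : ∀ r, 0 < r → ∫⁻ t in Ioi r, ENNReal.ofReal (f t / t) ≤ ENNReal.ofReal (C * f r))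
    {r : ℝ} (hr : 0 < r) (k : ℕ) :
    f (2 ^ k * r) ≤ (2 * Cd * C / (2 * Cd * C + 1)) ^ k * ((1 + 2 * Cd * C) * f r) := by
  set M := 2 * Cd * C
  have hM : 0 ≤ M := by positivity
  have h := le_geometric_of_tsum_tail_le ENNReal.ofReal_ne_top
    (tsum_ofReal_apply_two_pow_mul_le hCd hf hdec hint hr) k
  rwa [← ENNReal.ofReal_one, ← ENNReal.ofReal_add hM zero_le_one,
    ← ENNReal.ofReal_div_of_pos (by linarith), ← ENNReal.ofReal_pow (by positivity),
    ← ENNReal.ofReal_add zero_le_one hM, pow_zero, one_mul, ← ENNReal.ofReal_mul (by positivity),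
    ← ENNReal.ofReal_mul (by positivity), ENNReal.ofReal_le_ofReal_iff (by
      have := hf r hr
      positivity)] at h

lemma lintegral_Ioi_rpow_div_le (hCd : 0 ≤ Cd) (hf : ∀ r, 0 < r → 0 < f r)
    (hdec : ∀ r s, 0 < r → r < s → f s ≤ Cd * f r) {A ρ θ : ℝ} (hA : 0 ≤ A) (hρ₀ : 0 ≤ ρ)
    (hρ₁ : ρ < 1) (hθ : 0 < θ) (hdecay : ∀ r, 0 < r → ∀ k : ℕ, f (2 ^ k * r) ≤ ρ ^ k * (A * f r))
    {t : ℝ} (ht : 0 < t) :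
    ∫⁻ u in Ioi t, ENNReal.ofReal (f u ^ θ / u) ≤
      ENNReal.ofReal ((Cd * A) ^ θ / (1 - ρ ^ θ) * f t ^ θ) := by
  have hρθ₀ : 0 ≤ ρ ^ θ := Real.rpow_nonneg hρ₀ θ
  have hρθ₁ : ρ ^ θ < 1 := Real.rpow_lt_one hρ₀ hρ₁ hθ
  have hft := (hf t ht).le
  have hpiece : ∀ j : ℕ, ∫⁻ u in Ioc (2 ^ j * t) (2 * (2 ^ j * t)), ENNReal.ofReal (f u ^ θ / u) ≤
      ENNReal.ofReal ((Cd * A) ^ θ * f t ^ θ * (ρ ^ θ) ^ j) := fun j ↦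
    setLIntegral_Ioc_two_mul_le (by positivity) (by positivity) fun u hu ↦
      calc f u ^ θ ≤ (Cd * (ρ ^ j * (A * f t))) ^ θ := by
            have hu₀ : 0 < u := lt_trans (by positivity) hu.1
            refine Real.rpow_le_rpow (hf u hu₀).le ?_ hθ.le
            exact (hdec _ u (by positivity) hu.1).trans
              (mul_le_mul_of_nonneg_left (hdecay t ht j) hCd)
        _ = (Cd * A) ^ θ * f t ^ θ * (ρ ^ θ) ^ j := by
            rw [show Cd * (ρ ^ j * (A * f t)) = Cd * A * f t * ρ ^ j by ring,
              Real.mul_rpow (by positivity) (by positivity),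
              Real.mul_rpow (by positivity) hft, Real.rpow_pow_comm hρ₀]
  calc ∫⁻ u in Ioi t, ENNReal.ofReal (f u ^ θ / u)
      ≤ ∑' j : ℕ, ENNReal.ofReal ((Cd * A) ^ θ * f t ^ θ * (ρ ^ θ) ^ j) := by
        rw [lintegral_Ioi_eq_tsum_Ioc_two_pow_mul _ ht]
        exact ENNReal.tsum_le_tsum hpiece
    _ = ENNReal.ofReal (∑' j : ℕ, (Cd * A) ^ θ * f t ^ θ * (ρ ^ θ) ^ j) :=
        (ENNReal.ofReal_tsum_of_nonneg (fun j ↦ by positivity)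
          ((summable_geometric_of_lt_one hρθ₀ hρθ₁).mul_left _)).symm
    _ = ENNReal.ofReal ((Cd * A) ^ θ / (1 - ρ ^ θ) * f t ^ θ) := by
        rw [tsum_mul_left, tsum_geometric_of_lt_one hρθ₀ hρθ₁]
        congr 1
        ring

end QuasiDecreasing

lemma exists_lintegral_Ioi_rpow_div_le {Cd C θ : ℝ} (hCd : 1 ≤ Cd) (hC : 0 ≤ C) (hθ : 0 < θ) :
    ∃ K > 0, ∀ f : ℝ → ℝ, (∀ r, 0 < r → 0 < f r) → (∀ r s, 0 < r → r < s → f s ≤ Cd * f r) →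
      (∀ r, 0 < r → ∫⁻ t in Ioi r, ENNReal.ofReal (f t / t) ≤ ENNReal.ofReal (C * f r)) →
      ∀ t, 0 < t → ∫⁻ u in Ioi t, ENNReal.ofReal (f u ^ θ / u) ≤ ENNReal.ofReal (K * f t ^ θ) := by
  set M := 2 * Cd * C
  have hM : 0 ≤ M := by positivity
  have hρ₁ : M / (M + 1) < 1 := (div_lt_one (by linarith)).2 (by linarith)
  refine ⟨(Cd * (1 + M)) ^ θ / (1 - (M / (M + 1)) ^ θ), ?_, fun f hf hdec hint t ht ↦ ?_⟩
  · have := Real.rpow_lt_one (by positivity) hρ₁ hθ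
    have : 0 < (Cd * (1 + M)) ^ θ := by positivity
    positivity
  · exact lintegral_Ioi_rpow_div_le (by linarith) hf hdec (by positivity) (by positivity) hρ₁ hθ
      (fun r hr k ↦ apply_two_pow_mul_le_geometric hCd hf hdec hC hint hr k) ht

lemma setLIntegral_Ioi_mul_setLIntegral_Ioi_le {f g : ℝ → ℝ} {a b C₀ K₁ K₂ r : ℝ}
    (hf : ∀ t, 0 < t → 0 ≤ f t) (hK₁ : 0 ≤ K₁) (hC₀ : 0 ≤ C₀)
    (hgf : ∀ t, 0 < t → g t * f t ^ a ≤ C₀ * f t ^ b)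
    (htail_a : ∀ t, 0 < t →
      ∫⁻ u in Ioi t, ENNReal.ofReal (f u ^ a / u) ≤ ENNReal.ofReal (K₁ * f t ^ a))
    (htail_b : ∫⁻ t in Ioi r, ENNReal.ofReal (f t ^ b / t) ≤ ENNReal.ofReal (K₂ * f r ^ b))
    (hr : 0 < r) :
    ∫⁻ t in Ioi r, ENNReal.ofReal (g t / t) * ∫⁻ u in Ioi t, ENNReal.ofReal (f u ^ a / u) ≤
      ENNReal.ofReal (K₁ * C₀ * K₂ * f r ^ b) := by
  have hpointwise : ∀ t ∈ Ioi r, ENNReal.ofReal (g t / t) *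
      ∫⁻ u in Ioi t, ENNReal.ofReal (f u ^ a / u) ≤
        ENNReal.ofReal (K₁ * C₀) * ENNReal.ofReal (f t ^ b / t) := fun t ht ↦ by
    have ht : 0 < t := hr.trans ht
    have hfa : 0 ≤ f t ^ a := Real.rpow_nonneg (hf t ht) a
    calc ENNReal.ofReal (g t / t) * ∫⁻ u in Ioi t, ENNReal.ofReal (f u ^ a / u)
        ≤ ENNReal.ofReal (g t / t) * ENNReal.ofReal (K₁ * f t ^ a) := by
          gcongr
          exact htail_a t ht
      _ = ENNReal.ofReal (K₁ / t * (g t * f t ^ a)) := by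
          rw [← ENNReal.ofReal_mul' (by positivity)]
          ring_nf
      _ ≤ ENNReal.ofReal (K₁ / t * (C₀ * f t ^ b)) :=
          ENNReal.ofReal_le_ofReal (mul_le_mul_of_nonneg_left (hgf t ht) (by positivity))
      _ = ENNReal.ofReal (K₁ * C₀) * ENNReal.ofReal (f t ^ b / t) := by
          rw [← ENNReal.ofReal_mul (by positivity)]
          ring_nf
  calc _ ≤ ∫⁻ t in Ioi r, ENNReal.ofReal (K₁ * C₀) * ENNReal.ofReal (f t ^ b / t) :=
        setLIntegral_mono' measurableSet_Ioi hpointwise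
    _ = ENNReal.ofReal (K₁ * C₀) * ∫⁻ t in Ioi r, ENNReal.ofReal (f t ^ b / t) :=
        lintegral_const_mul' _ _ ENNReal.ofReal_ne_top
    _ ≤ ENNReal.ofReal (K₁ * C₀) * ENNReal.ofReal (K₂ * f r ^ b) := by gcongr
    _ = ENNReal.ofReal (K₁ * C₀ * K₂ * f r ^ b) := by
        rw [← ENNReal.ofReal_mul (by positivity)]
        ring_nf

theorem iterated_integral_bound_general (n : ℕ) (p q : ℝ) (hp : 1 < p) (hpq : p ≤ q)
    (φ ψ : EuclideanSpace ℝ (Fin n) → ℝ → ℝ)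
    (hφpos : ∀ x r, 0 < r → 0 < φ x r)
    (hφdec : Gdec n φ)
    (C : ℝ) (hC : 0 < C)
    (hint : ∀ x (r : ℝ), 0 < r →
      ∫⁻ t in Set.Ioi r, ENNReal.ofReal (φ x t / t) ≤ ENNReal.ofReal (C * φ x r))
    (C₀ : ℝ) (hC₀ : 0 < C₀)
    (hψφ : ∀ x (r : ℝ), 0 < r → ψ x r * φ x r ^ (1 / p) ≤ C₀ * φ x r ^ (1 / q)) :
    ∃ C' : ℝ, 0 < C' ∧ ∀ z (r : ℝ), 0 < r →
      (∫⁻ t in Set.Ioi r, ENNReal.ofReal (ψ z t / t) *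
          ∫⁻ u in Set.Ioi t, ENNReal.ofReal (φ z u ^ (1 / p) / u))
        ≤ ENNReal.ofReal (C' * φ z r ^ (1 / q)) := by
  obtain ⟨Cg, -, hGdec⟩ := hφdec
  have hdec : ∀ z r s, 0 < r → r < s → φ z s ≤ max Cg 1 * φ z r := fun z r s hr hrs ↦
    (hGdec z r s hr hrs).1.trans
      (mul_le_mul_of_nonneg_right (le_max_left _ _) (hφpos z r hr).le)
  obtain ⟨K₁, hK₁, htail₁⟩ := exists_lintegral_Ioi_rpow_div_le (le_max_right Cg 1) hC.le
    (one_div_pos.2 (by linarith : 0 < p))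
  obtain ⟨K₂, hK₂, htail₂⟩ := exists_lintegral_Ioi_rpow_div_le (le_max_right Cg 1) hC.le
    (one_div_pos.2 (by linarith : 0 < q))
  refine ⟨K₁ * C₀ * K₂, by positivity, fun z r hr ↦ ?_⟩
  exact setLIntegral_Ioi_mul_setLIntegral_Ioi_le (fun t ht ↦ (hφpos z t ht).le) hK₁.le hC₀.le
    (hψφ z) (htail₁ _ (hφpos z) (hdec z) (hint z))
    (htail₂ _ (hφpos z) (hdec z) (hint z) r hr) hr

/-- under `ψ(x,r)φ(x,r)^{1/p} ≤ C₀φ(x,r)^{1/q}` and the decay and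
integral conditions on `φ`, one has
`∫_r^∞ (ψ(z,t)/t)(∫_t^∞ φ(z,u)^{1/p}/u du) dt ≤ C' φ(z,r)^{1/q}`. -/
theorem iterated_integral_bound (n : ℕ) (p q : ℝ) (hp : 1 < p) (hpq : p ≤ q)
    (φ ψ : EuclideanSpace ℝ (Fin n) → ℝ → ℝ)
    (hφpos : ∀ x r, 0 < r → 0 < φ x r)
    (hψpos : ∀ x r, 0 < r → 0 < ψ x r)
    (hφdec : Gdec n φ) (hφdoub : DoublingCond n φ)
    (C : ℝ) (hC : 0 < C)
    (hint : ∀ x (r : ℝ), 0 < r →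
      ∫⁻ t in Set.Ioi r, ENNReal.ofReal (φ x t / t) ≤ ENNReal.ofReal (C * φ x r))
    (C₀ : ℝ) (hC₀ : 0 < C₀)
    (hψφ : ∀ x (r : ℝ), 0 < r → ψ x r * φ x r ^ (1 / p) ≤ C₀ * φ x r ^ (1 / q)) :
    ∃ C' : ℝ, 0 < C' ∧ ∀ z (r : ℝ), 0 < r →
      (∫⁻ t in Set.Ioi r, ENNReal.ofReal (ψ z t / t) *
          ∫⁻ u in Set.Ioi t, ENNReal.ofReal (φ z u ^ (1 / p) / u))
        ≤ ENNReal.ofReal (C' * φ z r ^ (1 / q)) :=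
  iterated_integral_bound_general n p q hp hpq φ ψ hφpos hφdec C hC hint C₀ hC₀ hψφ
end
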